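/- Let s > 1 and let ρ be an s-factor of automorphy for G. Let f be a measurable automorphic form for ρ with ‖f‖_{L^∞_s(𝔻,G)} = ess sup_{z∈𝔻} λ(z)^{−s}|f(z)| < ∞, and let h : 𝔻 → ℂ be measurable with ∫_𝔻 λ(z)^{2−s}|h(z)| d²z < ∞. Then both integrals below converge absolutely and ⟨f, Θ_ρ[h]⟩^G_s = ∫_𝔻 f(w)·conj(h(w))·λ(w)^{2−2s} d²w. -/

import Mathlib

open MeasureTheory

/-- The open unit disc in `ℂ`. -/
def UD : Set ℂ := Metric.ball 0 1

/-!
Every automorphism `g` of the disc satisfies `|g'(z)| (1 - |z|²) = 1 - |g z|²`: Schwarz–Pick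
applied to `g` and to `g⁻¹` gives both inequalities. Together with `|ρ_g| = |g'|^(-s)` and
automorphy of `f`, this turns the `g`-th term of `f · conj Θ · λ^(2-2s)` into
`|g'|² · φ ∘ g`, where `φ = f · conj h · λ^(2-2s)`. Since `|g'|²` is the real Jacobian of `g`
and the tiles `g(ℱ)` cover `𝔻` without overlap up to null sets, integrating this series
termwise over `ℱ` (legitimate because the same computation with `‖φ‖` gives
`∫_𝔻 ‖φ‖ < ∞`) and changing variables in each term yields `∫_𝔻 φ`. Finally `φ` is
integrable because `|φ| = (λ^(-s) |f|) · (λ^(2-s) |h|)` is an `L^∞ × L¹` product.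
-/

open Metric Set Filter Topology Complex ComplexConjugate

theorem integrable_tsum_of_tsum_lintegral_enorm_ne_top {α E ι : Type*} [MeasurableSpace α]
    {μ : Measure α} [NormedAddCommGroup E] [CompleteSpace E] [Countable ι] {f : ι → α → E}
    (hf : ∀ i, AEStronglyMeasurable (f i) μ) (hf' : ∑' i, ∫⁻ a, ‖f i a‖ₑ ∂μ ≠ ⊤) :
    Integrable (fun a => ∑' i, f i a) μ := by
  have hf_enorm : ∀ i, AEMeasurable (fun a => ‖f i a‖ₑ) μ := fun i => (hf i).enorm
  have hsum : ∀ᵐ a ∂μ, Summable fun i => f i a := by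
    rw [← lintegral_tsum hf_enorm] at hf'
    filter_upwards [ae_lt_top' (AEMeasurable.tsum hf_enorm) hf'] with a ha
    exact Summable.of_enorm ha.ne
  refine ⟨aestronglyMeasurable_of_tendsto_ae atTop
    (fun b => Finset.aestronglyMeasurable_fun_sum b fun i _ => hf i)
    (hsum.mono fun a ha => ha.hasSum), ?_⟩
  calc ∫⁻ a, ‖∑' i, f i a‖ₑ ∂μ ≤ ∫⁻ a, ∑' i, ‖f i a‖ₑ ∂μ :=
        lintegral_mono fun a => enorm_tsum_le_tsum_enorm
    _ = ∑' i, ∫⁻ a, ‖f i a‖ₑ ∂μ := lintegral_tsum hf_enorm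
    _ < ⊤ := hf'.lt_top

lemma lintegral_mul_lt_top_of_essSup_lt_top {α : Type*} [MeasurableSpace α] {μ : Measure α}
    {u v : α → ENNReal} (hu : essSup u μ < ⊤) (hv : ∫⁻ a, v a ∂μ < ⊤) :
    ∫⁻ a, u a * v a ∂μ < ⊤ :=
  calc ∫⁻ a, u a * v a ∂μ ≤ ∫⁻ a, essSup u μ * v a ∂μ :=
        lintegral_mono_ae ((ENNReal.ae_le_essSup u).mono fun _ ha => mul_le_mul_left ha _)
    _ = essSup u μ * ∫⁻ a, v a ∂μ := lintegral_const_mul' _ _ hu.ne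
    _ < ⊤ := ENNReal.mul_lt_top hu hv

section Unfolding

variable {E V ι : Type*} [NormedAddCommGroup E] [NormedSpace ℝ E] [FiniteDimensional ℝ E]
  [MeasurableSpace E] [BorelSpace E] {μ : Measure E} [μ.IsAddHaarMeasure]
  [NormedAddCommGroup V] [NormedSpace ℝ V]
  {s U : Set E} {T : ι → E → E} {T' : ι → E → E →L[ℝ] E} {φ : E → V}

lemma tsum_lintegral_enorm_abs_det_smul_comp [Countable ι] (hs : MeasurableSet s)
    (hT' : ∀ i, ∀ x ∈ s, HasFDerivWithinAt (T i) (T' i x) s x) (hT_inj : ∀ i, InjOn (T i) s)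
    (hdisj : Pairwise (Function.onFun (AEDisjoint μ) fun i => T i '' s))
    (hcover : ⋃ i, T i '' s =ᵐ[μ] U) :
    ∑' i, ∫⁻ x in s, ‖|(T' i x).det| • φ (T i x)‖ₑ ∂μ = ∫⁻ y in U, ‖φ y‖ₑ ∂μ := by
  calc ∑' i, ∫⁻ x in s, ‖|(T' i x).det| • φ (T i x)‖ₑ ∂μ
      = ∑' i, ∫⁻ y in T i '' s, ‖φ y‖ₑ ∂μ := by
        refine tsum_congr fun i => ?_
        rw [lintegral_image_eq_lintegral_abs_det_fderiv_mul μ hs (hT' i) (hT_inj i)]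
        simp only [enorm_smul, Real.enorm_eq_ofReal_abs, abs_abs]
    _ = ∫⁻ y in ⋃ i, T i '' s, ‖φ y‖ₑ ∂μ := (lintegral_iUnion₀ (fun i =>
        (measurable_image_of_fderivWithin hs (hT' i) (hT_inj i)).nullMeasurableSet) hdisj _).symm
    _ = ∫⁻ y in U, ‖φ y‖ₑ ∂μ := setLIntegral_congr hcover

lemma integrableOn_abs_det_smul_comp (hs : MeasurableSet s)
    (hT' : ∀ i, ∀ x ∈ s, HasFDerivWithinAt (T i) (T' i x) s x) (hT_inj : ∀ i, InjOn (T i) s)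
    (hcover : ⋃ i, T i '' s =ᵐ[μ] U) (hφ : IntegrableOn φ U μ) (i : ι) :
    IntegrableOn (fun x => |(T' i x).det| • φ (T i x)) s μ :=
  (integrableOn_image_iff_integrableOn_abs_det_fderiv_smul μ hs (hT' i) (hT_inj i) φ).mp
    (hφ.mono_set_ae ((subset_iUnion (fun i => T i '' s) i).eventuallyLE.trans hcover.le))

lemma integrableOn_tsum_abs_det_smul_comp [Countable ι] [CompleteSpace V] (hs : MeasurableSet s)
    (hT' : ∀ i, ∀ x ∈ s, HasFDerivWithinAt (T i) (T' i x) s x) (hT_inj : ∀ i, InjOn (T i) s)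
    (hdisj : Pairwise (Function.onFun (AEDisjoint μ) fun i => T i '' s))
    (hcover : ⋃ i, T i '' s =ᵐ[μ] U)
    (hφ : IntegrableOn φ U μ) :
    IntegrableOn (fun x => ∑' i, |(T' i x).det| • φ (T i x)) s μ :=
  integrable_tsum_of_tsum_lintegral_enorm_ne_top
    (fun i => (integrableOn_abs_det_smul_comp hs hT' hT_inj hcover hφ i).aestronglyMeasurable)
    ((tsum_lintegral_enorm_abs_det_smul_comp hs hT' hT_inj hdisj hcover).trans_ne hφ.2.ne)

lemma setIntegral_tsum_abs_det_smul_comp [Countable ι] (hs : MeasurableSet s)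
    (hT' : ∀ i, ∀ x ∈ s, HasFDerivWithinAt (T i) (T' i x) s x) (hT_inj : ∀ i, InjOn (T i) s)
    (hdisj : Pairwise (Function.onFun (AEDisjoint μ) fun i => T i '' s))
    (hcover : ⋃ i, T i '' s =ᵐ[μ] U)
    (hφ : IntegrableOn φ U μ) :
    ∫ x in s, ∑' i, |(T' i x).det| • φ (T i x) ∂μ = ∫ y in U, φ y ∂μ := by
  rw [integral_tsum
    (fun i => (integrableOn_abs_det_smul_comp hs hT' hT_inj hcover hφ i).aestronglyMeasurable)
    ((tsum_lintegral_enorm_abs_det_smul_comp hs hT' hT_inj hdisj hcover).trans_ne hφ.2.ne)]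
  calc ∑' i, ∫ x in s, |(T' i x).det| • φ (T i x) ∂μ
      = ∑' i, ∫ y in T i '' s, φ y ∂μ := tsum_congr fun i =>
        (integral_image_eq_integral_abs_det_fderiv_smul μ hs (hT' i) (hT_inj i) φ).symm
    _ = ∫ y in ⋃ i, T i '' s, φ y ∂μ := (integral_iUnion_ae (fun i =>
        (measurable_image_of_fderivWithin hs (hT' i) (hT_inj i)).nullMeasurableSet) hdisj
        (hφ.mono_set_ae hcover.le)).symm
    _ = ∫ y in U, φ y ∂μ := setIntegral_congr_set hcover

end Unfolding

lemma det_restrictScalars_smulRight_one (c : ℂ) :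
    ((ContinuousLinearMap.smulRight (1 : ℂ →L[ℂ] ℂ) c).restrictScalars ℝ).det = normSq c := by
  simp [ContinuousLinearMap.det, LinearMap.det_restrictScalars, Algebra.norm_complex_apply]

lemma mem_UD_iff {z : ℂ} : z ∈ UD ↔ ‖z‖ < 1 := mem_ball_zero_iff

lemma one_sub_sq_norm_pos {z : ℂ} (hz : z ∈ UD) : 0 < 1 - ‖z‖ ^ 2 := by
  have := mem_UD_iff.mp hz
  nlinarith [norm_nonneg z]

noncomputable def mobius (a z : ℂ) : ℂ := (a - z) / (1 - conj a * z)

lemma mobius_self (a : ℂ) : mobius a a = 0 := by simp [mobius]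

lemma mobius_zero (a : ℂ) : mobius a 0 = a := by simp [mobius]

lemma one_sub_conj_mul_self (a : ℂ) : 1 - conj a * a = ((1 - ‖a‖ ^ 2 : ℝ) : ℂ) := by
  push_cast
  rw [conj_mul']

lemma one_sub_conj_mul_ne_zero {a z : ℂ} (ha : a ∈ UD) (hz : z ∈ UD) : 1 - conj a * z ≠ 0 := by
  have hlt : ‖conj a * z‖ < 1 := by
    rw [norm_mul, norm_conj]
    exact mul_lt_one_of_nonneg_of_lt_one_left (norm_nonneg a) (mem_UD_iff.mp ha)
      (mem_UD_iff.mp hz).le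
  intro h
  rw [← sub_eq_zero.mp h, norm_one] at hlt
  exact hlt.false

lemma sq_norm_one_sub_conj_mul_sub_sq_norm_sub (a z : ℂ) :
    ‖1 - conj a * z‖ ^ 2 - ‖a - z‖ ^ 2 = (1 - ‖a‖ ^ 2) * (1 - ‖z‖ ^ 2) := by
  have key : ((‖1 - conj a * z‖ ^ 2 - ‖a - z‖ ^ 2 : ℝ) : ℂ)
      = (((1 - ‖a‖ ^ 2) * (1 - ‖z‖ ^ 2) : ℝ) : ℂ) := by
    push_cast
    simp only [← conj_mul', map_sub, map_mul, map_one, conj_conj]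
    ring
  exact_mod_cast key

lemma mobius_mem_UD {a z : ℂ} (ha : a ∈ UD) (hz : z ∈ UD) : mobius a z ∈ UD := by
  have hden := norm_pos_iff.mpr (one_sub_conj_mul_ne_zero ha hz)
  have hsq : ‖a - z‖ ^ 2 < ‖1 - conj a * z‖ ^ 2 := by
    have := sq_norm_one_sub_conj_mul_sub_sq_norm_sub a z
    nlinarith [mul_pos (one_sub_sq_norm_pos ha) (one_sub_sq_norm_pos hz)]
  rw [mem_UD_iff, mobius, norm_div, div_lt_one hden]
  exact (pow_lt_pow_iff_left₀ (norm_nonneg _) hden.le two_ne_zero).mp hsq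

lemma hasDerivAt_mobius {a z : ℂ} (h : 1 - conj a * z ≠ 0) :
    HasDerivAt (mobius a) (-((1 - ‖a‖ ^ 2 : ℝ) : ℂ) / (1 - conj a * z) ^ 2) z := by
  have hnum : HasDerivAt (fun w => a - w) (-1) z := by
    simpa using (hasDerivAt_id z).const_sub a
  have hden : HasDerivAt (fun w => 1 - conj a * w) (-conj a) z := by
    simpa using ((hasDerivAt_id z).const_mul (conj a)).const_sub 1
  refine (hnum.div hden h).congr_deriv ?_
  rw [← one_sub_conj_mul_self]
  ring

lemma differentiableOn_mobius {a : ℂ} (ha : a ∈ UD) : DifferentiableOn ℂ (mobius a) UD :=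
  fun _ hz =>
    (hasDerivAt_mobius (one_sub_conj_mul_ne_zero ha hz)).differentiableAt.differentiableWithinAt

lemma norm_deriv_mul_one_sub_sq_le {f : ℂ → ℂ} (hf : DifferentiableOn ℂ f UD)
    (hmaps : MapsTo f UD UD) {z : ℂ} (hz : z ∈ UD) :
    ‖deriv f z‖ * (1 - ‖z‖ ^ 2) ≤ 1 - ‖f z‖ ^ 2 := by
  set w := f z
  have hw : w ∈ UD := hmaps hz
  -- `Φ` fixes `0`, so the Schwarz lemma bounds `‖Φ' 0‖`, which is the ratio of the two sides.
  set Φ := mobius w ∘ f ∘ mobius z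
  have hΦ_maps : MapsTo Φ UD UD := fun u hu => mobius_mem_UD hw (hmaps (mobius_mem_UD hz hu))
  have hΦ_diff : DifferentiableOn ℂ Φ UD :=
    (differentiableOn_mobius hw).comp (hf.comp (differentiableOn_mobius hz)
      fun _ hu => mobius_mem_UD hz hu) fun _ hu => hmaps (mobius_mem_UD hz hu)
  have hΦ_zero : Φ 0 = 0 := by simp [Φ, mobius_zero, w, mobius_self]
  have hf' : HasDerivAt f (deriv f (mobius z 0)) (mobius z 0) := by
    rw [mobius_zero]
    exact (hf.differentiableAt (isOpen_ball.mem_nhds hz)).hasDerivAt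
  have hΦ' := (hasDerivAt_mobius (a := w) (z := f (mobius z 0)) (by
    simpa [mobius_zero] using one_sub_conj_mul_ne_zero hw hw)).comp (0 : ℂ) (hf'.comp (0 : ℂ)
    (hasDerivAt_mobius (a := z) (z := 0) (by simp)))
  have hschwarz : ‖deriv Φ 0‖ ≤ 1 :=
    norm_deriv_le_one_of_mapsTo_ball (c := 0) hΦ_diff
      (by rw [hΦ_zero]; exact hΦ_maps.mono_right ball_subset_closedBall) one_pos
  rw [hΦ'.deriv, mobius_zero, one_sub_conj_mul_self] at hschwarz
  have hPz := one_sub_sq_norm_pos hz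
  have hPw := one_sub_sq_norm_pos hw
  simp only [mul_zero, sub_zero, one_pow, div_one, norm_mul, norm_div, norm_neg, norm_pow,
    norm_real, Real.norm_of_nonneg hPz.le, Real.norm_of_nonneg hPw.le] at hschwarz
  rw [← sub_nonneg] at hschwarz ⊢
  field_simp at hschwarz
  linarith

lemma one_sub_sq_norm_eq_norm_deriv_mul {f g : ℂ → ℂ} (hf : DifferentiableOn ℂ f UD)
    (hg : DifferentiableOn ℂ g UD) (hf_maps : MapsTo f UD UD) (hg_maps : MapsTo g UD UD)
    (hgf : ∀ x ∈ UD, g (f x) = x) {z : ℂ} (hz : z ∈ UD) :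
    1 - ‖f z‖ ^ 2 = ‖deriv f z‖ * (1 - ‖z‖ ^ 2) := by
  have hfz : f z ∈ UD := hf_maps hz
  have hf' := (hf.differentiableAt (isOpen_ball.mem_nhds hz)).hasDerivAt
  have hg' := (hg.differentiableAt (isOpen_ball.mem_nhds hfz)).hasDerivAt
  have hchain : deriv g (f z) * deriv f z = 1 :=
    ((hg'.comp z hf').congr_of_eventuallyEq (eventually_of_mem (isOpen_ball.mem_nhds hz)
      fun x hx => (hgf x hx).symm)).unique (hasDerivAt_id z)
  have hf_le := norm_deriv_mul_one_sub_sq_le hf hf_maps hz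
  have hg_le := norm_deriv_mul_one_sub_sq_le hg hg_maps hfz
  rw [hgf z hz] at hg_le
  have hnorm : ‖deriv g (f z)‖ * ‖deriv f z‖ = 1 := by rw [← norm_mul, hchain, norm_one]
  nlinarith [one_sub_sq_norm_pos hz, norm_nonneg (deriv g (f z)), norm_nonneg (deriv f z)]

lemma mul_conj_mul_inv_mul_weight_eq {s : ℝ} {z w d r x y c : ℂ} (hz : z ∈ UD) (hw : w ∈ UD)
    (hjac : 1 - ‖w‖ ^ 2 = ‖d‖ * (1 - ‖z‖ ^ 2)) (hr : ‖r‖ = ‖d‖ ^ (-s)) (hxy : y = r * x) :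
    x * conj (c * r⁻¹) * (((1 - ‖z‖ ^ 2) ^ (2 * s - 2) : ℝ) : ℂ)
      = normSq d • (y * conj c * (((1 - ‖w‖ ^ 2) ^ (2 * s - 2) : ℝ) : ℂ)) := by
  have hPz := one_sub_sq_norm_pos hz
  have hd : 0 < ‖d‖ := pos_of_mul_pos_left (hjac ▸ one_sub_sq_norm_pos hw) hPz.le
  have hr0 : r ≠ 0 := norm_pos_iff.mp (hr ▸ Real.rpow_pos_of_pos hd _)
  have hweight : (normSq r)⁻¹ * (1 - ‖z‖ ^ 2) ^ (2 * s - 2)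
      = normSq d * (1 - ‖w‖ ^ 2) ^ (2 * s - 2) := by
    have hd_pow : ((‖d‖ ^ (-s)) ^ 2)⁻¹ = ‖d‖ ^ 2 * ‖d‖ ^ (2 * s - 2) := by
      rw [← Real.rpow_two, ← Real.rpow_two, ← Real.rpow_mul hd.le, ← Real.rpow_neg hd.le,
        ← Real.rpow_add hd]
      ring_nf
    rw [normSq_eq_norm_sq, normSq_eq_norm_sq, hr, hd_pow, hjac, Real.mul_rpow hd.le hPz.le]
    ring
  have hx : x = r⁻¹ * y := by rw [hxy, inv_mul_cancel_left₀ hr0]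
  have hr_conj : r⁻¹ * conj r⁻¹ = ((normSq r)⁻¹ : ℝ) := by
    rw [map_inv₀, ← mul_inv, mul_conj, ofReal_inv]
  calc x * conj (c * r⁻¹) * (((1 - ‖z‖ ^ 2) ^ (2 * s - 2) : ℝ) : ℂ)
      = y * conj c * (r⁻¹ * conj r⁻¹ * (((1 - ‖z‖ ^ 2) ^ (2 * s - 2) : ℝ) : ℂ)) := by
        rw [hx, map_mul]; ring
    _ = normSq d • (y * conj c * (((1 - ‖w‖ ^ 2) ^ (2 * s - 2) : ℝ) : ℂ)) := by
        rw [hr_conj, ← ofReal_mul, hweight, real_smul, ofReal_mul]; ring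

lemma integrableOn_mul_conj_mul_weight {f h : ℂ → ℂ} {s : ℝ} (hf_meas : Measurable f)
    (hh_meas : Measurable h)
    (hf_bdd : essSup (fun z => ENNReal.ofReal ((1 - ‖z‖ ^ 2) ^ s * ‖f z‖))
      (volume.restrict UD) < ⊤)
    (hh_int : ∫⁻ z in UD, ENNReal.ofReal ((1 - ‖z‖ ^ 2) ^ (s - 2) * ‖h z‖) < ⊤) :
    IntegrableOn (fun w => f w * conj (h w) * (((1 - ‖w‖ ^ 2) ^ (2 * s - 2) : ℝ) : ℂ))
      UD volume := by
  refine ⟨((hf_meas.mul (continuous_conj.measurable.comp hh_meas)).mul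
    (by fun_prop)).aestronglyMeasurable, ?_⟩
  refine lt_of_eq_of_lt (setLIntegral_congr_fun measurableSet_ball fun z hz => ?_)
    (lintegral_mul_lt_top_of_essSup_lt_top hf_bdd hh_int)
  have hP := one_sub_sq_norm_pos hz
  rw [← ofReal_norm, ← ENNReal.ofReal_mul (by positivity), norm_mul, norm_mul, norm_conj,
    norm_real, Real.norm_of_nonneg (by positivity),
    show 2 * s - 2 = s + (s - 2) by ring, Real.rpow_add hP]
  ring_nf

theorem weil_petersson_pairing_poincare_series_general
    {G : Type*} [Group G] [Countable G]
    (A : G → ℂ → ℂ)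
    (hA_one : ∀ z ∈ UD, A 1 z = z)
    (hA_mul : ∀ g h : G, ∀ z ∈ UD, A (g * h) z = A g (A h z))
    (hA_holo : ∀ g : G, DifferentiableOn ℂ (A g) UD)
    (hA_bij : ∀ g : G, Set.BijOn (A g) UD UD)
    (F : Set ℂ) (hF_sub : F ⊆ UD) (hF_meas : MeasurableSet F)
    (hF_cover : volume (UD \ ⋃ g : G, A g '' F) = 0)
    (hF_disj : ∀ g h : G, g ≠ h → volume (A g '' F ∩ A h '' F) = 0)
    (s : ℝ)
    (ρ : G → ℂ → ℂ)
    (hρ_s : ∀ g : G, ∀ z ∈ UD,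
      ‖ρ g z‖ = ‖deriv (A g) z‖ ^ (-s))
    (f : ℂ → ℂ) (hf_meas : Measurable f)
    (hf_auto : ∀ g : G, ∀ z ∈ UD, f (A g z) = ρ g z * f z)
    (hf_bdd : essSup
      (fun z => ENNReal.ofReal ((1 - ‖z‖ ^ 2) ^ s * ‖f z‖))
      (volume.restrict UD) < ⊤)
    (h : ℂ → ℂ) (hh_meas : Measurable h)
    (hh_int : ∫⁻ z in UD,
      ENNReal.ofReal ((1 - ‖z‖ ^ 2) ^ (s - 2) * ‖h z‖) < ⊤)
    (Θ : ℂ → ℂ) (hΘ : Θ = fun z => ∑' g : G, h (A g z) * (ρ g z)⁻¹) :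
    IntegrableOn
      (fun z => f z * (starRingEnd ℂ) (Θ z) *
        (((1 - ‖z‖ ^ 2) ^ (2 * s - 2) : ℝ) : ℂ)) F volume ∧
    IntegrableOn
      (fun w => f w * (starRingEnd ℂ) (h w) *
        (((1 - ‖w‖ ^ 2) ^ (2 * s - 2) : ℝ) : ℂ)) UD volume ∧
    (∫ z in F, f z * (starRingEnd ℂ) (Θ z) *
        (((1 - ‖z‖ ^ 2) ^ (2 * s - 2) : ℝ) : ℂ)) =
      ∫ w in UD, f w * (starRingEnd ℂ) (h w) *
        (((1 - ‖w‖ ^ 2) ^ (2 * s - 2) : ℝ) : ℂ) := by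
  have hA_maps : ∀ g, MapsTo (A g) UD UD := fun g => (hA_bij g).mapsTo
  have hA_jac : ∀ g, ∀ z ∈ UD, 1 - ‖A g z‖ ^ 2 = ‖deriv (A g) z‖ * (1 - ‖z‖ ^ 2) :=
    fun g z hz => one_sub_sq_norm_eq_norm_deriv_mul (hA_holo g) (hA_holo g⁻¹) (hA_maps g)
      (hA_maps g⁻¹) (fun x hx => by rw [← hA_mul _ _ x hx, inv_mul_cancel, hA_one x hx]) hz
  have hA_deriv : ∀ g, ∀ z ∈ F, HasFDerivWithinAt (A g)
      ((ContinuousLinearMap.smulRight (1 : ℂ →L[ℂ] ℂ) (deriv (A g) z)).restrictScalars ℝ) F z :=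
    fun g z hz => (((hA_holo g).differentiableAt (isOpen_ball.mem_nhds (hF_sub hz))).hasDerivAt
      |>.hasFDerivAt.restrictScalars ℝ).hasFDerivWithinAt
  have hA_inj : ∀ g, InjOn (A g) F := fun g => (hA_bij g).injOn.mono hF_sub
  have hF_tiles : ⋃ g, A g '' F =ᵐ[volume] UD := ae_eq_set.mpr
    ⟨by rw [sdiff_eq_empty.mpr (iUnion_subset fun g => ((hA_maps g).mono_left hF_sub).image_subset),
      measure_empty], hF_cover⟩
  have hunfold : ∀ z ∈ F, f z * conj (Θ z) * (((1 - ‖z‖ ^ 2) ^ (2 * s - 2) : ℝ) : ℂ)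
      = ∑' g, |((ContinuousLinearMap.smulRight (1 : ℂ →L[ℂ] ℂ)
          (deriv (A g) z)).restrictScalars ℝ).det| • (f (A g z) * conj (h (A g z)) *
          (((1 - ‖A g z‖ ^ 2) ^ (2 * s - 2) : ℝ) : ℂ)) := by
    intro z hz
    have hzD := hF_sub hz
    rw [hΘ, conj_tsum, ← tsum_mul_left, ← tsum_mul_right]
    refine tsum_congr fun g => ?_
    rw [det_restrictScalars_smulRight_one, abs_of_nonneg (normSq_nonneg _)]
    exact mul_conj_mul_inv_mul_weight_eq hzD (hA_maps g hzD) (hA_jac g z hzD) (hρ_s g z hzD)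
      (hf_auto g z hzD)
  have hφ := integrableOn_mul_conj_mul_weight hf_meas hh_meas hf_bdd hh_int
  refine ⟨(integrableOn_tsum_abs_det_smul_comp hF_meas hA_deriv hA_inj hF_disj hF_tiles
    hφ).congr_fun (fun z hz => (hunfold z hz).symm) hF_meas, hφ, ?_⟩
  rw [setIntegral_congr_fun hF_meas hunfold]
  exact setIntegral_tsum_abs_det_smul_comp hF_meas hA_deriv hA_inj hF_disj hF_tiles hφ

/-- unfolding of the Weil–Petersson pairing against a Poincaré series.
With `G`, `A`, `F`, `s > 1`, `ρ` as in the standing setup, `f` a measurable automorphic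
form for `ρ` with finite `L^∞_s(𝔻,G)`-norm and `h` measurable with finite
`L¹_s(𝔻)`-norm, both integrals converge absolutely and
`⟨f, Θ_ρ[h]⟩^G_s = ∫_𝔻 f(w) conj(h(w)) λ(w)^(2-2s) d²w`
(the pairing integral being over the fundamental domain `F`;
`λ(z)^(2-2s) = (1 - |z|²)^(2s-2)`, `λ(z)^(-s) = (1 - |z|²)^s`). -/
theorem weil_petersson_pairing_poincare_series
    {G : Type*} [Group G] [Countable G]
    (A : G → ℂ → ℂ)
    (hA_one : ∀ z ∈ UD, A 1 z = z)
    (hA_mul : ∀ g h : G, ∀ z ∈ UD, A (g * h) z = A g (A h z))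
    (hA_holo : ∀ g : G, DifferentiableOn ℂ (A g) UD)
    (hA_bij : ∀ g : G, Set.BijOn (A g) UD UD)
    (hA_proper : ∀ z ∈ UD, ∃ U : Set ℂ, U ⊆ UD ∧ IsOpen U ∧ z ∈ U ∧
      {g : G | (A g '' U ∩ U).Nonempty}.Finite)
    (F : Set ℂ) (hF_sub : F ⊆ UD) (hF_meas : MeasurableSet F)
    (hF_cover : volume (UD \ ⋃ g : G, A g '' F) = 0)
    (hF_disj : ∀ g h : G, g ≠ h → volume (A g '' F ∩ A h '' F) = 0)
    (s : ℝ) (hs : 1 < s)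
    (ρ : G → ℂ → ℂ)
    (hρ_holo : ∀ g : G, DifferentiableOn ℂ (ρ g) UD)
    (hρ_ne : ∀ g : G, ∀ z ∈ UD, ρ g z ≠ 0)
    (hρ_cocycle : ∀ g h : G, ∀ z ∈ UD, ρ (g * h) z = ρ g (A h z) * ρ h z)
    (hρ_s : ∀ g : G, ∀ z ∈ UD,
      ‖ρ g z‖ = ‖deriv (A g) z‖ ^ (-s))
    (f : ℂ → ℂ) (hf_meas : Measurable f)
    (hf_auto : ∀ g : G, ∀ z ∈ UD, f (A g z) = ρ g z * f z)
    (hf_bdd : essSup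
      (fun z => ENNReal.ofReal ((1 - ‖z‖ ^ 2) ^ s * ‖f z‖))
      (volume.restrict UD) < ⊤)
    (h : ℂ → ℂ) (hh_meas : Measurable h)
    (hh_int : ∫⁻ z in UD,
      ENNReal.ofReal ((1 - ‖z‖ ^ 2) ^ (s - 2) * ‖h z‖) < ⊤)
    (Θ : ℂ → ℂ) (hΘ : Θ = fun z => ∑' g : G, h (A g z) * (ρ g z)⁻¹) :
    IntegrableOn
      (fun z => f z * (starRingEnd ℂ) (Θ z) *
        (((1 - ‖z‖ ^ 2) ^ (2 * s - 2) : ℝ) : ℂ)) F volume ∧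
    IntegrableOn
      (fun w => f w * (starRingEnd ℂ) (h w) *
        (((1 - ‖w‖ ^ 2) ^ (2 * s - 2) : ℝ) : ℂ)) UD volume ∧
    (∫ z in F, f z * (starRingEnd ℂ) (Θ z) *
        (((1 - ‖z‖ ^ 2) ^ (2 * s - 2) : ℝ) : ℂ)) =
      ∫ w in UD, f w * (starRingEnd ℂ) (h w) *
        (((1 - ‖w‖ ^ 2) ^ (2 * s - 2) : ℝ) : ℂ) :=
  weil_petersson_pairing_poincare_series_general A hA_one hA_mul hA_holo hA_bij F hF_sub hF_meas
    hF_cover hF_disj s ρ hρ_s f hf_meas hf_auto hf_bdd h hh_meas hh_int Θ hΘ
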